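/- Let ‖·‖ be a URTC-norm on ℝ², let d > 0, and let φ : ℝ² → ℝ² be a map that preserves distance d (i.e., ‖x − y‖ = d implies ‖φ(x) − φ(y)‖ = d). If b₀, b₁, b₂ ∈ ℝ² are in regular d-position, then φ(b₁ + b₂ − b₀) = φ(b₁) + φ(b₂) − φ(b₀). -/

import Mathlib

/-- `N` is a norm on `ℝ²`. -/
structure IsNorm (N : ℝ × ℝ → ℝ) : Prop where
  add_le : ∀ x y : ℝ × ℝ, N (x + y) ≤ N x + N y
  smul_eq : ∀ (c : ℝ) (x : ℝ × ℝ), N (c • x) = |c| * N x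
  eq_zero_of : ∀ x : ℝ × ℝ, N x = 0 → x = 0

/-- `N` is a URTC-norm: for every `a b` at `N`-distance `1`, there are exactly two
points `x` with `N (a - x) = 1` and `N (b - x) = 1`. -/
def IsURTC (N : ℝ × ℝ → ℝ) : Prop :=
  ∀ a b : ℝ × ℝ, N (a - b) = 1 →
    {x : ℝ × ℝ | N (a - x) = 1 ∧ N (b - x) = 1}.encard = 2

/-!
The two points at distance `d` from both ends of a segment `pq` of length `d` are `x` and its
reflection `p + q - x`; this pins `φ (b₁ + b₂ - b₀)` down to `φ b₀` or `φ b₁ + φ b₂ - φ b₀`, and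
the same argument shows that no rhombus `0, a, a + b, b` with all sides and the diagonal `a - b`
of length `d` has its long diagonal of length `d` either.

To exclude `φ (b₁ + b₂ - b₀) = φ b₀`, put `w = b₁ + b₂ - b₀` and find, by an intermediate value
argument on the (connected, compact) sphere of radius `d`, such a rhombus `w, w + a, w + a + b,
w + b` whose far vertex is at distance `d` from `b₀`. Its image under `φ` is either degenerate,
contradicting `φ (w + a + b) ≠ φ b₀ = φ w`, or again such a rhombus, whose long diagonal
`φ (w + a + b) - φ w` would then have length `d`.
-/

/-- `ℝ × ℝ` renormed by `N`, so that continuity of `N` and compactness and connectedness of its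
spheres come from the theory of finite-dimensional normed spaces. -/
def NormedPlane (_ : ℝ × ℝ → ℝ) : Type := ℝ × ℝ

namespace NormedPlane

variable {N : ℝ × ℝ → ℝ}

instance : AddCommGroup (NormedPlane N) := inferInstanceAs (AddCommGroup (ℝ × ℝ))
instance : Module ℝ (NormedPlane N) := inferInstanceAs (Module ℝ (ℝ × ℝ))
instance : FiniteDimensional ℝ (NormedPlane N) := inferInstanceAs (FiniteDimensional ℝ (ℝ × ℝ))
instance : Norm (NormedPlane N) := ⟨N⟩

end NormedPlane

namespace IsNorm

variable {N : ℝ × ℝ → ℝ}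

theorem map_zero (hN : IsNorm N) : N 0 = 0 := by
  simpa using hN.smul_eq 0 0

theorem map_neg (hN : IsNorm N) (x : ℝ × ℝ) : N (-x) = N x := by
  simpa using hN.smul_eq (-1) x

theorem map_sub_comm (hN : IsNorm N) (x y : ℝ × ℝ) : N (x - y) = N (y - x) := by
  rw [← neg_sub, hN.map_neg]

theorem map_two_smul (hN : IsNorm N) (x : ℝ × ℝ) : N ((2 : ℝ) • x) = 2 * N x := by
  rw [hN.smul_eq, abs_two]

theorem nonneg (hN : IsNorm N) (x : ℝ × ℝ) : 0 ≤ N x := by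
  have := hN.add_le x (-x)
  rw [add_neg_cancel, hN.map_zero, hN.map_neg] at this
  linarith

theorem normedSpaceCore (hN : IsNorm N) : NormedSpace.Core ℝ (NormedPlane N) where
  norm_nonneg := hN.nonneg
  norm_smul := hN.smul_eq
  norm_triangle := hN.add_le
  norm_eq_zero_iff x := ⟨hN.eq_zero_of x, fun h => h ▸ hN.map_zero⟩

end IsNorm

namespace NormedPlane

variable {N : ℝ × ℝ → ℝ} [Fact (IsNorm N)]

noncomputable instance : NormedAddCommGroup (NormedPlane N) :=
  .ofCore (Fact.out : IsNorm N).normedSpaceCore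

noncomputable instance : NormedSpace ℝ (NormedPlane N) :=
  .ofCore (Fact.out : IsNorm N).normedSpaceCore

noncomputable def equiv : (ℝ × ℝ) ≃L[ℝ] NormedPlane N :=
  LinearEquiv.toContinuousLinearEquiv (LinearEquiv.refl ℝ (ℝ × ℝ))

theorem norm_equiv (x : ℝ × ℝ) : ‖(equiv x : NormedPlane N)‖ = N x := rfl

theorem preimage_sphere (r : ℝ) :
    equiv ⁻¹' Metric.sphere (0 : NormedPlane N) r = {x | N x = r} := by
  ext x
  simp [norm_equiv]

end NormedPlane

namespace IsNorm

variable {N : ℝ × ℝ → ℝ}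

theorem continuous (hN : IsNorm N) : Continuous N := by
  have : Fact (IsNorm N) := ⟨hN⟩
  exact continuous_norm.comp (NormedPlane.equiv (N := N)).continuous

theorem isCompact_sphere (hN : IsNorm N) (r : ℝ) : IsCompact {x | N x = r} := by
  have : Fact (IsNorm N) := ⟨hN⟩
  rw [← NormedPlane.preimage_sphere]
  exact NormedPlane.equiv.toHomeomorph.isCompact_preimage.mpr (_root_.isCompact_sphere 0 r)

theorem isConnected_sphere (hN : IsNorm N) {r : ℝ} (hr : 0 ≤ r) : IsConnected {x | N x = r} := by
  have : Fact (IsNorm N) := ⟨hN⟩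
  rw [← NormedPlane.preimage_sphere]
  have hrank : 1 < Module.rank ℝ (NormedPlane N) := by
    rw [← NormedPlane.equiv.toLinearEquiv.rank_eq, rank_prod', Module.rank_self]
    norm_num
  exact NormedPlane.equiv.toHomeomorph.isConnected_preimage.mpr
    (_root_.isConnected_sphere hrank 0 hr)

end IsNorm

theorem continuous_of_eqOn_comp_fst {X Y Z : Type*} [TopologicalSpace X] [TopologicalSpace Y]
    [CompactSpace Y] [TopologicalSpace Z] {G : Set (X × Y)} (hG : IsClosed G)
    (hG_fst : ∀ x, ∃ y, (x, y) ∈ G) {F : X × Y → Z} (hF : Continuous F) {g : X → Z}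
    (hgF : Set.EqOn (g ∘ Prod.fst) F G) : Continuous g := by
  have hπ : Topology.IsQuotientMap fun p : G => p.1.1 :=
    (isClosedMap_fst_of_compactSpace.comp hG.isClosedMap_subtype_val).isQuotientMap
      (by fun_prop) fun x => let ⟨y, hy⟩ := hG_fst x; ⟨⟨(x, y), hy⟩, rfl⟩
  rw [hπ.continuous_iff]
  exact (hF.comp continuous_subtype_val).congr fun p => (hgF p.2).symm

theorem Set.eq_pair_of_encard_eq_two {α : Type*} {s : Set α} {x y : α} (hs : s.encard = 2)
    (hx : x ∈ s) (hy : y ∈ s) (hxy : x ≠ y) : s = {x, y} :=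
  (Set.Finite.eq_of_subset_of_encard_le (Set.toFinite _)
    (Set.insert_subset hx (Set.singleton_subset_iff.mpr hy))
    (hs.trans (Set.encard_pair hxy).symm).le).symm

namespace IsURTC

variable {N : ℝ × ℝ → ℝ} {d : ℝ}

theorem encard_eq_two (hN : IsNorm N) (hU : IsURTC N) (hd : 0 < d) {p q : ℝ × ℝ}
    (hpq : N (p - q) = d) : {x | N (p - x) = d ∧ N (q - x) = d}.encard = 2 := by
  have hscale (a y : ℝ × ℝ) : N (a - d • y) = d ↔ N (d⁻¹ • a - y) = 1 := by
    rw [show a - d • y = d • (d⁻¹ • a - y) by rw [smul_sub, smul_inv_smul₀ hd.ne'],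
      hN.smul_eq, abs_of_pos hd, mul_eq_left₀ hd.ne']
  have himage : {x | N (p - x) = d ∧ N (q - x) = d}
      = (d • ·) '' {y | N (d⁻¹ • p - y) = 1 ∧ N (d⁻¹ • q - y) = 1} := by
    ext x
    refine ⟨fun hx => ⟨d⁻¹ • x, ?_, smul_inv_smul₀ hd.ne' x⟩, ?_⟩
    · simpa only [Set.mem_ofPred_eq, ← hscale, smul_inv_smul₀ hd.ne'] using hx
    · rintro ⟨y, hy, rfl⟩
      simpa only [Set.mem_ofPred_eq, hscale] using hy
  rw [himage, (smul_right_injective _ hd.ne').encard_image]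
  exact hU _ _ <| by
    rw [← smul_sub, hN.smul_eq, abs_inv, abs_of_pos hd, hpq, inv_mul_cancel₀ hd.ne']

theorem eq_or_eq_add_sub (hN : IsNorm N) (hU : IsURTC N) (hd : 0 < d) {p q x y : ℝ × ℝ}
    (hpq : N (p - q) = d) (hx : N (p - x) = d ∧ N (q - x) = d)
    (hy : N (p - y) = d ∧ N (q - y) = d) : y = x ∨ y = p + q - x := by
  have hx' : N (p - (p + q - x)) = d ∧ N (q - (p + q - x)) = d := by
    rw [show p - (p + q - x) = -(q - x) by abel, show q - (p + q - x) = -(p - x) by abel,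
      hN.map_neg, hN.map_neg]
    exact hx.symm
  have hne : x ≠ p + q - x := by
    intro h
    have h2 : p - q = (2 : ℝ) • (p - x) := by linear_combination (norm := module) h
    have := hN.map_two_smul (p - x)
    rw [← h2, hpq, hx.1] at this
    linarith
  have hpair := Set.eq_pair_of_encard_eq_two (encard_eq_two hN hU hd hpq) hx hx' hne
  exact hpair.subset hy

theorem lt_norm_add (hN : IsNorm N) (hU : IsURTC N) (hd : 0 < d) {a b : ℝ × ℝ}
    (ha : N a = d) (hb : N b = d) (hab : N (a - b) = d) : d < N (a + b) := by
  have hle : d ≤ N (a + b) := by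
    have := hN.add_le (a + b) (a - b)
    rw [show a + b + (a - b) = (2 : ℝ) • a by module, hN.map_two_smul, ha, hab] at this
    linarith
  refine hle.lt_of_ne fun h => ?_
  have hb' : N (0 - b) = d := by rw [zero_sub, hN.map_neg, hb]
  rcases eq_or_eq_add_sub hN hU hd (p := a) (q := 0) (x := b) (y := a + b)
    (by rwa [sub_zero]) ⟨hab, hb'⟩
    ⟨by rwa [sub_add_cancel_left, hN.map_neg], by rw [zero_sub, hN.map_neg, h]⟩ with h' | h'
  · rw [add_eq_right.mp h', hN.map_zero] at ha
    exact hd.ne ha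
  · have : (2 : ℝ) • b = 0 := by linear_combination (norm := module) h'
    rw [smul_eq_zero.mp this |>.resolve_left two_ne_zero, hN.map_zero] at hb
    exact hd.ne hb

theorem map_add_sub_eq_or (hN : IsNorm N) (hU : IsURTC N) (hd : 0 < d)
    {φ : ℝ × ℝ → ℝ × ℝ} (hφ : ∀ x y, N (x - y) = d → N (φ x - φ y) = d) {a A B : ℝ × ℝ}
    (haA : N (a - A) = d) (haB : N (a - B) = d) (hAB : N (A - B) = d) :
    φ (A + B - a) = φ a ∨ φ (A + B - a) = φ A + φ B - φ a := by
  have hφsymm : ∀ x y, N (x - y) = d → N (φ y - φ x) = d := fun x y h => by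
    rw [hN.map_sub_comm]; exact hφ x y h
  refine eq_or_eq_add_sub hN hU hd (hφ A B hAB) ⟨hφsymm _ _ haA, hφsymm _ _ haB⟩ ⟨?_, ?_⟩
  · exact hφ _ _ (by rwa [show A - (A + B - a) = a - B by abel])
  · exact hφ _ _ (by rwa [show B - (A + B - a) = a - A by abel])

/-- The apexes over `0x` are `b` and `x - b`, so `H x b` depends on `x` alone; it is continuous in
`x` because the apex relation is closed with compact fibres. -/
theorem exists_eq_zero_of_swap_invariant (hN : IsNorm N) (hU : IsURTC N) (hd : 0 < d)
    {H : ℝ × ℝ → ℝ × ℝ → ℝ} (hH : Continuous (Function.uncurry H))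
    (hswap : ∀ x b, H x (x - b) = H x b) {x₀ b₀ x₁ b₁ : ℝ × ℝ}
    (h₀ : N x₀ = d ∧ N b₀ = d ∧ N (x₀ - b₀) = d) (h₁ : N x₁ = d ∧ N b₁ = d ∧ N (x₁ - b₁) = d)
    (hpos : 0 < H x₀ b₀) (hneg : H x₁ b₁ < 0) :
    ∃ x b, N x = d ∧ N b = d ∧ N (x - b) = d ∧ H x b = 0 := by
  set S := {x : ℝ × ℝ | N x = d}
  have : CompactSpace S := isCompact_iff_compactSpace.mp (hN.isCompact_sphere d)
  have : ConnectedSpace S := isConnected_iff_connectedSpace.mp (hN.isConnected_sphere hd.le)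
  have hcommon (x : S) : {b | N (x - b) = d ∧ N (0 - b) = d}.encard = 2 :=
    encard_eq_two hN hU hd (by rw [sub_zero]; exact x.2)
  have hpartner (x : S) : ∃ b : S, N (x - b : ℝ × ℝ) = d := by
    obtain ⟨b, hxb, hb⟩ := Set.nonempty_of_encard_ne_zero (by rw [hcommon x]; norm_num)
    exact ⟨⟨b, by rwa [zero_sub, hN.map_neg] at hb⟩, hxb⟩
  choose c hc using hpartner
  have hg (x b : S) (hxb : N (x - b : ℝ × ℝ) = d) : H x (c x) = H x b := by
    have hb' (b : S) : N (0 - b : ℝ × ℝ) = d := by rw [zero_sub, hN.map_neg]; exact b.2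
    rcases eq_or_eq_add_sub hN hU hd (by rw [sub_zero]; exact x.2) ⟨hc x, hb' _⟩ ⟨hxb, hb' b⟩
      with h | h
    · rw [h]
    · rw [h, add_zero, hswap]
  have hG : IsClosed {p : S × S | N (p.1 - p.2 : ℝ × ℝ) = d} :=
    isClosed_eq (hN.continuous.comp
      (by fun_prop : Continuous fun p : S × S => (p.1 - p.2 : ℝ × ℝ))) continuous_const
  have hgc : Continuous fun x : S => H x (c x) :=
    continuous_of_eqOn_comp_fst hG (fun x => ⟨c x, hc x⟩) (F := fun p => H p.1 p.2)
      (hH.comp (continuous_subtype_val.prodMap continuous_subtype_val)) fun p hp => hg p.1 p.2 hp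
  obtain ⟨x, hx⟩ := intermediate_value_univ ⟨x₁, h₁.1⟩ ⟨x₀, h₀.1⟩ hgc
    ⟨(hg ⟨x₁, h₁.1⟩ ⟨b₁, h₁.2.1⟩ h₁.2.2 ▸ hneg).le,
      (hg ⟨x₀, h₀.1⟩ ⟨b₀, h₀.2.1⟩ h₀.2.2 ▸ hpos).le⟩
  exact ⟨x, c x, x.2, (c x).2, hc x, hx⟩

theorem exists_norm_add_add_eq (hN : IsNorm N) (hU : IsURTC N) (hd : 0 < d) {u v : ℝ × ℝ}
    (hu : N u = d) (hv : N v = d) (huv : N (u - v) = d) :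
    ∃ a b, N a = d ∧ N b = d ∧ N (a - b) = d ∧ N (a + b + (u + v)) = d := by
  set f := fun x b => N (x + b + (u + v)) - d
  have hpos : 0 < f u v * f u (u - v) := by
    have h₁ : d < N (u + v) := lt_norm_add hN hU hd hu hv huv
    have h₂ : N (u + v + (u + v)) = 2 * N (u + v) := by rw [← two_smul ℝ, hN.map_two_smul]
    have h₃ : N (u + (u - v) + (u + v)) = 3 * d := by
      rw [show u + (u - v) + (u + v) = (3 : ℝ) • u by module, hN.smul_eq, hu,
        abs_of_pos three_pos]
    simp only [f, h₂, h₃]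
    exact mul_pos (by linarith) (by linarith)
  have hneg : f (-u) (-v) * f (-u) (-u - -v) < 0 := by
    have h₁ : d < N (v + (v - u)) :=
      lt_norm_add hN hU hd hv (by rwa [hN.map_sub_comm]) (by rwa [sub_sub_cancel])
    have h₂ : -u + -v + (u + v) = 0 := by abel
    have h₃ : -u + (-u - -v) + (u + v) = v + (v - u) := by abel
    simp only [f, h₂, h₃, hN.map_zero]
    exact mul_neg_of_neg_of_pos (by linarith) (by linarith)
  obtain ⟨x, b, hx, hb, hxb, h⟩ := exists_eq_zero_of_swap_invariant hN hU hd
    (H := fun x b => f x b * f x (x - b)) (by have := hN.continuous; fun_prop)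
    (fun x b => by simp only [sub_sub_cancel, mul_comm]) ⟨hu, hv, huv⟩
    ⟨by rwa [hN.map_neg], by rwa [hN.map_neg], by rwa [← neg_sub', hN.map_neg]⟩ hpos hneg
  rcases mul_eq_zero.mp h with h | h
  · exact ⟨x, b, hx, hb, hxb, sub_eq_zero.mp h⟩
  · exact ⟨x, x - b, hx, hxb, by rwa [sub_sub_cancel], sub_eq_zero.mp h⟩

end IsURTC

open IsURTC in
/-- For a URTC-norm, a map preserving distance `d` sends any regular `d`-position
triple `(b₀, b₁, b₂)` so that `φ (b₁ + b₂ - b₀) = φ b₁ + φ b₂ - φ b₀`. -/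
theorem preserves_fourth_vertex (N : ℝ × ℝ → ℝ) (hN : IsNorm N) (hU : IsURTC N)
    (d : ℝ) (hd : 0 < d) (φ : ℝ × ℝ → ℝ × ℝ)
    (hφ : ∀ x y : ℝ × ℝ, N (x - y) = d → N (φ x - φ y) = d)
    (b₀ b₁ b₂ : ℝ × ℝ)
    (h01 : N (b₀ - b₁) = d) (h12 : N (b₁ - b₂) = d) (h20 : N (b₂ - b₀) = d) :
    φ (b₁ + b₂ - b₀) = φ b₁ + φ b₂ - φ b₀ := by
  set w := b₁ + b₂ - b₀ with hw
  refine (map_add_sub_eq_or hN hU hd hφ h01 (by rwa [hN.map_sub_comm]) h12).resolve_left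
    fun hcollapse => ?_
  obtain ⟨a, b, ha, hb, hab, hsum⟩ := exists_norm_add_add_eq hN hU hd (u := b₁ - b₀)
    (v := b₂ - b₀) (by rwa [hN.map_sub_comm]) h20 (by rwa [sub_sub_sub_cancel_right])
  have hx : N (φ (w + a + (w + b) - w) - φ w) = d := by
    rw [hcollapse]
    exact hφ _ _ (by rwa [show w + a + (w + b) - w - b₀ = a + b + (b₁ - b₀ + (b₂ - b₀)) by
      rw [hw]; abel])
  have hwa : N (w - (w + a)) = d := by rwa [sub_add_cancel_left, hN.map_neg]
  have hwb : N (w - (w + b)) = d := by rwa [sub_add_cancel_left, hN.map_neg]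
  rcases map_add_sub_eq_or hN hU hd hφ hwa hwb (by rwa [add_sub_add_left_eq_sub]) with h | h
  · rw [h, sub_self, hN.map_zero] at hx
    exact hd.ne hx
  · refine (lt_norm_add hN hU hd (a := φ (w + a) - φ w) (b := φ (w + b) - φ w)
      (hφ _ _ (by rwa [add_sub_cancel_left])) (hφ _ _ (by rwa [add_sub_cancel_left]))
      (by rw [sub_sub_sub_cancel_right]; exact hφ _ _ (by rwa [add_sub_add_left_eq_sub]))).ne' ?_
    rw [← hx, h]
    congr 1
    abel
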